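/- Let n > 2 and 1 < p < ∞. Then for every s in the open probability simplex Δₙ°, ‖Diag(s) − s sᵀ‖_p < 1/2, yet sup_{s ∈ Δₙ°} ‖Diag(s) − s sᵀ‖_p = 1/2. In particular, there exists a sequence (s_k) ⊂ Δₙ° converging to a boundary point of the simplex with ‖Diag(s_k) − s_k s_kᵀ‖_p → 1/2, and the supremum is not attained in Δₙ°. -/

import Mathlib

open scoped ENNReal BigOperators

/-- The softmax function with inverse temperature `lam`. -/
noncomputable def softmax {n : ℕ} (lam : ℝ) (x : Fin n → ℝ) : Fin n → ℝ :=
  fun i => Real.exp (lam * x i) / ∑ j, Real.exp (lam * x j)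

/-- The ℓ_p norm on `Fin n → ℝ`, for `p ∈ [1, ∞]`. -/
noncomputable def lpNorm {n : ℕ} (p : ℝ≥0∞) (x : Fin n → ℝ) : ℝ :=
  if p = ⊤ then ⨆ i, |x i| else (∑ i, |x i| ^ p.toReal) ^ (1 / p.toReal)

/-- The ℓ_p-induced operator norm of a matrix. -/
noncomputable def opNorm {n m : ℕ} (p : ℝ≥0∞) (A : Matrix (Fin n) (Fin m) ℝ) : ℝ :=
  ⨆ v : {v : Fin m → ℝ // v ≠ 0}, lpNorm p (A.mulVec v.val) / lpNorm p v.val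

/-- The matrix `Diag(s) - s sᵀ` (Jacobian of softmax with `lam = 1` at a point with value `s`). -/
noncomputable def softmaxJac {n : ℕ} (s : Fin n → ℝ) : Matrix (Fin n) (Fin n) ℝ :=
  Matrix.diagonal s - Matrix.vecMulVec s s

/-- The open (interior of the) probability simplex. -/
def openSimplex (n : ℕ) : Set (Fin n → ℝ) :=
  {u | (∀ i, 0 < u i) ∧ ∑ i, u i = 1}

/-- The (closed) probability simplex. -/
def probSimplex (n : ℕ) : Set (Fin n → ℝ) :=
  {u | (∀ i, 0 ≤ u i) ∧ ∑ i, u i = 1}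

/-!
The row sums of `J = Diag(s) - s sᵀ` are `r i = ∑ j, |J i j| = 2 s_i (1 - s_i) ≤ 1/2`, and `J` is
symmetric. Hölder's inequality gives the Schur test
`‖J v‖_q^q ≤ max_j (∑ i, r i ^ (q - 1) * |J i j|) * ‖v‖_q^q`, and by symmetry
`∑ i, r i ^ (q - 1) * |J i j| ≤ (1/2)^(q-1) * r j ≤ (1/2)^q`. In the interior of the simplex no
entry of `J` vanishes, and for `n > 2` some `s_i ≠ 1/2`, so `r i < 1/2`; as `q > 1` this makes
every column bound strict, whence `‖J‖_q < 1/2`.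

Conversely, if `s_i = s_j` then `e_i - e_j` is an eigenvector of `J` with eigenvalue `s_i`, so
`‖J‖_q ≥ s_i`. Interior points with `s_0 = s_1` tending to `(1/2, 1/2, 0, …, 0)` push the norm
to `1/2`.
-/

open Filter Topology Finset Matrix

section LpNorm

variable {n m : ℕ} (p : ℝ≥0∞)

lemma lpNorm_eq_norm [Fact (1 ≤ p)] (x : Fin n → ℝ) : lpNorm p x = ‖WithLp.toLp p x‖ := by
  unfold lpNorm
  split_ifs with hp
  · subst hp
    simp [PiLp.norm_eq_ciSup]
  · have hp0 : p ≠ 0 := (zero_lt_one.trans_le Fact.out).ne'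
    simp [PiLp.norm_eq_sum (ENNReal.toReal_pos hp0 hp)]

variable [Fact (1 ≤ p)]

lemma lpNorm_nonneg (x : Fin n → ℝ) : 0 ≤ lpNorm p x := by
  rw [lpNorm_eq_norm]
  exact norm_nonneg _

lemma lpNorm_pos {x : Fin n → ℝ} (hx : x ≠ 0) : 0 < lpNorm p x := by
  rw [lpNorm_eq_norm]
  exact norm_pos_iff.2 (by simpa using hx)

lemma lpNorm_smul (a : ℝ) (x : Fin n → ℝ) : lpNorm p (a • x) = |a| * lpNorm p x := by
  rw [lpNorm_eq_norm, lpNorm_eq_norm, WithLp.toLp_smul, norm_smul, Real.norm_eq_abs]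

lemma opNorm_le {A : Matrix (Fin n) (Fin m) ℝ} {C : ℝ} (hC : 0 ≤ C)
    (h : ∀ v, lpNorm p (A *ᵥ v) ≤ C * lpNorm p v) : opNorm p A ≤ C :=
  Real.iSup_le (fun v => div_le_of_le_mul₀ (lpNorm_nonneg p _) hC (h v)) hC

lemma div_le_opNorm {A : Matrix (Fin n) (Fin m) ℝ} {C : ℝ}
    (h : ∀ v, lpNorm p (A *ᵥ v) ≤ C * lpNorm p v) {v : Fin m → ℝ} (hv : v ≠ 0) :
    lpNorm p (A *ᵥ v) / lpNorm p v ≤ opNorm p A := by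
  have hbdd : BddAbove (Set.range fun w : {w : Fin m → ℝ // w ≠ 0} =>
      lpNorm p (A *ᵥ w.1) / lpNorm p w.1) := by
    refine ⟨C, ?_⟩
    rintro _ ⟨w, rfl⟩
    exact (div_le_iff₀ (lpNorm_pos p w.2)).2 (h w)
  exact le_ciSup hbdd ⟨v, hv⟩

end LpNorm

lemma lpNorm_le_of_sum_rpow_le {n : ℕ} {p : ℝ≥0∞} (hp : p ≠ ⊤) {x y : Fin n → ℝ} {K : ℝ}
    (hK : 0 ≤ K) (h : ∑ i, |x i| ^ p.toReal ≤ K * ∑ i, |y i| ^ p.toReal) :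
    lpNorm p x ≤ K ^ (1 / p.toReal) * lpNorm p y := by
  simp only [lpNorm, if_neg hp]
  rw [← Real.mul_rpow hK (sum_nonneg fun i _ => by positivity)]
  exact Real.rpow_le_rpow (sum_nonneg fun i _ => by positivity) h (by positivity)

lemma rpow_sum_mul_le_of_nonneg {ι : Type*} (s : Finset ι) {q : ℝ} (hq : 1 ≤ q) {w f : ι → ℝ}
    (hw : ∀ i, 0 ≤ w i) (hf : ∀ i, 0 ≤ f i) :
    (∑ i ∈ s, w i * f i) ^ q ≤ (∑ i ∈ s, w i) ^ (q - 1) * ∑ i ∈ s, w i * f i ^ q := by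
  have hW : 0 ≤ ∑ i ∈ s, w i := sum_nonneg fun i _ => hw i
  have hWf : 0 ≤ ∑ i ∈ s, w i * f i ^ q :=
    sum_nonneg fun i _ => mul_nonneg (hw i) (Real.rpow_nonneg (hf i) q)
  have hq0 : q ≠ 0 := by positivity
  calc (∑ i ∈ s, w i * f i) ^ q
      ≤ ((∑ i ∈ s, w i) ^ (1 - q⁻¹) * (∑ i ∈ s, w i * f i ^ q) ^ q⁻¹) ^ q :=
        Real.rpow_le_rpow (sum_nonneg fun i _ => mul_nonneg (hw i) (hf i))
          (Real.inner_le_weight_mul_Lp_of_nonneg s hq w f hw hf) (by positivity)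
    _ = (∑ i ∈ s, w i) ^ (q - 1) * ∑ i ∈ s, w i * f i ^ q := by
        rw [Real.mul_rpow (by positivity) (by positivity), ← Real.rpow_mul hW,
          Real.rpow_inv_rpow hWf hq0, sub_mul, inv_mul_cancel₀ hq0, one_mul]

lemma abs_mulVec_le {ι κ : Type*} [Fintype κ] (A : Matrix ι κ ℝ) (v : κ → ℝ) (i : ι) :
    |(A *ᵥ v) i| ≤ ∑ j, |A i j| * |v j| := by
  simpa only [mulVec, dotProduct, abs_mul] using abs_sum_le_sum_abs (fun j => A i j * v j) univ

/-- **Schur test** with the row sums as weights. -/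
theorem sum_abs_mulVec_rpow_le {ι κ : Type*} [Fintype ι] [Fintype κ] (A : Matrix ι κ ℝ) {q : ℝ}
    (hq : 1 ≤ q) (v : κ → ℝ) :
    ∑ i, |(A *ᵥ v) i| ^ q ≤ ∑ j, (∑ i, (∑ k, |A i k|) ^ (q - 1) * |A i j|) * |v j| ^ q := by
  calc ∑ i, |(A *ᵥ v) i| ^ q
      ≤ ∑ i, (∑ k, |A i k|) ^ (q - 1) * ∑ j, |A i j| * |v j| ^ q := by
        refine sum_le_sum fun i _ => ?_
        refine (Real.rpow_le_rpow (abs_nonneg _) (abs_mulVec_le A v i) (by positivity)).trans ?_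
        exact rpow_sum_mul_le_of_nonneg _ hq (fun j => abs_nonneg _) (fun j => abs_nonneg _)
    _ = ∑ j, (∑ i, (∑ k, |A i k|) ^ (q - 1) * |A i j|) * |v j| ^ q := by
        simp_rw [mul_sum, sum_mul]
        rw [sum_comm]
        exact sum_congr rfl fun j _ => sum_congr rfl fun i _ => by ring

lemma sum_rowSum_rpow_mul_abs_lt {ι : Type*} [Fintype ι] {A : Matrix ι ι ℝ} {R q : ℝ} (hq : 1 < q)
    (hsymm : ∀ i j, |A i j| = |A j i|) (hrow : ∀ i, ∑ k, |A i k| ≤ R) {i₀ j : ι}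
    (hA : A i₀ j ≠ 0) (hR : ∑ k, |A i₀ k| < R) :
    ∑ i, (∑ k, |A i k|) ^ (q - 1) * |A i j| < R ^ q := by
  have hR0 : 0 < R := (sum_nonneg fun k _ => abs_nonneg _).trans_lt hR
  calc ∑ i, (∑ k, |A i k|) ^ (q - 1) * |A i j|
      < ∑ i, R ^ (q - 1) * |A i j| := by
        refine sum_lt_sum (fun i _ => ?_) ⟨i₀, mem_univ _, ?_⟩
        · exact mul_le_mul_of_nonneg_right (Real.rpow_le_rpow (sum_nonneg fun k _ => abs_nonneg _)
            (hrow i) (by linarith)) (abs_nonneg _)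
        · exact mul_lt_mul_of_pos_right (Real.rpow_lt_rpow (sum_nonneg fun k _ => abs_nonneg _)
            hR (by linarith)) (abs_pos.2 hA)
    _ = R ^ (q - 1) * ∑ i, |A j i| := by simp_rw [mul_sum, hsymm]
    _ ≤ R ^ (q - 1) * R := by gcongr; exact hrow j
    _ = R ^ q := by rw [Real.rpow_sub_one hR0.ne', div_mul_cancel₀ _ hR0.ne']

theorem exists_lpNorm_mulVec_le_lt {n : ℕ} [NeZero n] {p : ℝ≥0∞} (hp : p ≠ ⊤)
    (hq : 1 < p.toReal) {A : Matrix (Fin n) (Fin n) ℝ} {R : ℝ}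
    (hsymm : ∀ i j, |A i j| = |A j i|) (hrow : ∀ i, ∑ k, |A i k| ≤ R)
    (hcol : ∀ j, ∃ i, A i j ≠ 0 ∧ ∑ k, |A i k| < R) :
    ∃ C < R, 0 ≤ C ∧ ∀ v, lpNorm p (A *ᵥ v) ≤ C * lpNorm p v := by
  set q := p.toReal
  set colBound : Fin n → ℝ := fun j => ∑ i, (∑ k, |A i k|) ^ (q - 1) * |A i j|
  have hbound_nonneg : ∀ j, 0 ≤ colBound j := fun j =>
    sum_nonneg fun i _ => mul_nonneg (Real.rpow_nonneg (sum_nonneg fun k _ => abs_nonneg _) _)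
      (abs_nonneg _)
  have hbound_lt : ∀ j, colBound j < R ^ q := fun j => by
    obtain ⟨i, hA, hR⟩ := hcol j
    exact sum_rowSum_rpow_mul_abs_lt hq hsymm hrow hA hR
  obtain ⟨j₀, hj₀⟩ := Finite.exists_max colBound
  have hR : 0 ≤ R := by
    obtain ⟨i, -, hR⟩ := hcol 0
    exact ((sum_nonneg fun k _ => abs_nonneg _).trans_lt hR).le
  refine ⟨colBound j₀ ^ (1 / q), ?_, Real.rpow_nonneg (hbound_nonneg j₀) _, fun v => ?_⟩
  · calc colBound j₀ ^ (1 / q) < (R ^ q) ^ (1 / q) :=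
          Real.rpow_lt_rpow (hbound_nonneg j₀) (hbound_lt j₀) (by positivity)
      _ = R := by rw [one_div, Real.rpow_rpow_inv hR (by positivity)]
  · refine lpNorm_le_of_sum_rpow_le hp (hbound_nonneg j₀) ?_
    calc ∑ i, |(A *ᵥ v) i| ^ q ≤ ∑ j, colBound j * |v j| ^ q :=
          sum_abs_mulVec_rpow_le A hq.le v
      _ ≤ colBound j₀ * ∑ j, |v j| ^ q := by
          rw [mul_sum]
          exact sum_le_sum fun j _ => mul_le_mul_of_nonneg_right (hj₀ j) (by positivity)

section Simplex

variable {n : ℕ} {s : Fin n → ℝ}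

lemma openSimplex_subset_probSimplex : openSimplex n ⊆ probSimplex n :=
  fun _ hs => ⟨fun i => (hs.1 i).le, hs.2⟩

lemma le_one_of_mem_probSimplex (hs : s ∈ probSimplex n) (i : Fin n) : s i ≤ 1 :=
  hs.2 ▸ single_le_sum (fun j _ => hs.1 j) (mem_univ i)

lemma lt_one_of_mem_openSimplex (hn : 1 < n) (hs : s ∈ openSimplex n) (i : Fin n) : s i < 1 := by
  have : Nontrivial (Fin n) := Fin.nontrivial_iff_two_le.2 hn
  obtain ⟨j, hj⟩ := exists_ne i
  exact hs.2 ▸ single_lt_sum hj (mem_univ i) (mem_univ j) (hs.1 j) fun k _ _ => (hs.1 k).le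

lemma exists_ne_half_of_sum_eq_one (hn : n ≠ 2) (hs : ∑ i, s i = 1) : ∃ i, s i ≠ 1 / 2 := by
  by_contra! h
  simp only [h, sum_const, card_univ, Fintype.card_fin, nsmul_eq_mul] at hs
  exact hn (by exact_mod_cast (by linarith : (n : ℝ) = 2))

lemma lineMap_mem_openSimplex {x y : Fin n → ℝ} (hx : x ∈ probSimplex n) (hy : y ∈ openSimplex n)
    {t : ℝ} (ht₀ : 0 < t) (ht₁ : t ≤ 1) : AffineMap.lineMap x y t ∈ openSimplex n := by
  rw [AffineMap.lineMap_apply_module]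
  refine ⟨fun i => ?_, ?_⟩
  · have := hx.1 i
    have := hy.1 i
    simp only [Pi.add_apply, Pi.smul_apply, smul_eq_mul]
    nlinarith
  · simp only [Pi.add_apply, Pi.smul_apply, smul_eq_mul, sum_add_distrib, ← mul_sum, hx.2, hy.2]
    ring

lemma const_inv_mem_openSimplex [NeZero n] : (fun _ => (n : ℝ)⁻¹) ∈ openSimplex n :=
  ⟨fun _ => by have := NeZero.pos n; positivity, by simp⟩

lemma single_add_single_mem_probSimplex (i j : Fin n) :
    Pi.single i (1 / 2) + Pi.single j (1 / 2) ∈ probSimplex n := by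
  refine ⟨fun k => ?_, ?_⟩
  · simp only [Pi.add_apply, Pi.single_apply]
    split_ifs <;> norm_num
  · simp only [Pi.add_apply, sum_add_distrib, sum_pi_single', mem_univ, if_true]
    norm_num

end Simplex

section SoftmaxJac

variable {n : ℕ} {s : Fin n → ℝ}

lemma softmaxJac_apply (i j : Fin n) :
    softmaxJac s i j = (if i = j then s i else 0) - s i * s j := by
  simp [softmaxJac, diagonal_apply, vecMulVec_apply]

lemma softmaxJac_apply_comm (i j : Fin n) : softmaxJac s i j = softmaxJac s j i := by
  rw [softmaxJac_apply, softmaxJac_apply, mul_comm]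
  by_cases h : i = j
  · subst h; rfl
  · rw [if_neg h, if_neg (Ne.symm h)]

lemma abs_softmaxJac_apply (hs : s ∈ probSimplex n) (i j : Fin n) :
    |softmaxJac s i j| = if i = j then s i * (1 - s i) else s i * s j := by
  rw [softmaxJac_apply]
  split_ifs with h
  · subst h
    rw [abs_of_nonneg (by nlinarith [hs.1 i, le_one_of_mem_probSimplex hs i])]
    ring
  · rw [zero_sub, abs_neg, abs_of_nonneg (mul_nonneg (hs.1 i) (hs.1 j))]

lemma sum_abs_softmaxJac (hs : s ∈ probSimplex n) (i : Fin n) :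
    ∑ j, |softmaxJac s i j| = 2 * s i * (1 - s i) := by
  simp_rw [abs_softmaxJac_apply hs]
  rw [← add_sum_erase _ _ (mem_univ i), if_pos rfl,
    sum_congr rfl fun j hj => if_neg (ne_of_mem_erase hj).symm, ← mul_sum,
    sum_erase_eq_sub (mem_univ i), hs.2]
  ring

lemma softmaxJac_apply_ne_zero (hn : 1 < n) (hs : s ∈ openSimplex n) (i j : Fin n) :
    softmaxJac s i j ≠ 0 := by
  rw [← abs_pos, abs_softmaxJac_apply (openSimplex_subset_probSimplex hs)]
  have := lt_one_of_mem_openSimplex hn hs i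
  split_ifs
  · exact mul_pos (hs.1 i) (by linarith)
  · exact mul_pos (hs.1 i) (hs.1 j)

theorem exists_lpNorm_softmaxJac_mulVec_le_lt (hn : 2 < n) {p : ℝ≥0∞} (hp₁ : 1 < p)
    (hp₂ : p ≠ ⊤) (hs : s ∈ openSimplex n) :
    ∃ C < 1 / 2, 0 ≤ C ∧ ∀ v, lpNorm p (softmaxJac s *ᵥ v) ≤ C * lpNorm p v := by
  have : NeZero n := ⟨by omega⟩
  have hq : 1 < p.toReal := by simpa using ENNReal.toReal_strict_mono hp₂ hp₁
  have hs' := openSimplex_subset_probSimplex hs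
  obtain ⟨i, hi⟩ := exists_ne_half_of_sum_eq_one hn.ne' hs.2
  refine exists_lpNorm_mulVec_le_lt hp₂ hq (fun a b => by rw [softmaxJac_apply_comm])
    (fun k => ?_) (fun j => ⟨i, softmaxJac_apply_ne_zero (by omega) hs i j, ?_⟩)
  · rw [sum_abs_softmaxJac hs']
    nlinarith [sq_nonneg (2 * s k - 1)]
  · rw [sum_abs_softmaxJac hs']
    nlinarith [sq_pos_of_ne_zero (sub_ne_zero.2 hi)]

theorem opNorm_softmaxJac_lt (hn : 2 < n) {p : ℝ≥0∞} (hp₁ : 1 < p) (hp₂ : p ≠ ⊤)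
    (hs : s ∈ openSimplex n) : opNorm p (softmaxJac s) < 1 / 2 := by
  have : Fact (1 ≤ p) := ⟨hp₁.le⟩
  obtain ⟨C, hC, hC₀, hbound⟩ := exists_lpNorm_softmaxJac_mulVec_le_lt hn hp₁ hp₂ hs
  exact (opNorm_le p hC₀ hbound).trans_lt hC

lemma softmaxJac_mulVec_single_sub_single {i j : Fin n} (h : s i = s j) :
    softmaxJac s *ᵥ (Pi.single i 1 - Pi.single j 1) = s i • (Pi.single i 1 - Pi.single j 1) := by
  ext k
  simp only [mulVec_sub, mulVec_single_one, Pi.sub_apply, col_apply, softmaxJac_apply,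
    Pi.smul_apply, smul_eq_mul, Pi.single_apply, h]
  split_ifs <;> grind

theorem le_opNorm_softmaxJac (hn : 2 < n) {p : ℝ≥0∞} (hp₁ : 1 < p) (hp₂ : p ≠ ⊤)
    (hs : s ∈ openSimplex n) {i j : Fin n} (hij : i ≠ j) (h : s i = s j) :
    s i ≤ opNorm p (softmaxJac s) := by
  have : Fact (1 ≤ p) := ⟨hp₁.le⟩
  obtain ⟨C, -, -, hbound⟩ := exists_lpNorm_softmaxJac_mulVec_le_lt hn hp₁ hp₂ hs
  have hv : (Pi.single i 1 - Pi.single j 1 : Fin n → ℝ) ≠ 0 := fun hv => by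
    simpa [Pi.single_apply, hij] using congrFun hv i
  have := div_le_opNorm p hbound hv
  rwa [softmaxJac_mulVec_single_sub_single h, lpNorm_smul, abs_of_pos (hs.1 i),
    mul_div_cancel_right₀ _ (lpNorm_pos p hv).ne'] at this

end SoftmaxJac

lemma ciSup_eq_of_tendsto {α : Type*} {S : Set α} {f : α → ℝ} {a : ℝ} (hle : ∀ x ∈ S, f x ≤ a)
    {u : ℕ → α} (hu : ∀ k, u k ∈ S) (hlim : Tendsto (fun k => f (u k)) atTop (𝓝 a)) :
    ⨆ x : S, f x = a := by
  have : Nonempty S := ⟨⟨u 0, hu 0⟩⟩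
  refine le_antisymm (ciSup_le fun x => hle x x.2) (le_of_tendsto' hlim fun k => ?_)
  exact le_ciSup (f := fun x : S => f x) ⟨a, by rintro _ ⟨x, rfl⟩; exact hle x x.2⟩ ⟨u k, hu k⟩

/-- for n > 2 and 1 < p < ∞, `‖Diag(s) - s sᵀ‖_p < 1/2` on the open simplex,
the supremum over the open simplex is 1/2, and it is approached by a sequence converging
to a boundary point of the simplex. -/
theorem sup_not_attained_p_between {n : ℕ} (hn : 2 < n)
    (p : ℝ≥0∞) (hp1 : 1 < p) (hp2 : p ≠ ⊤) :
    (∀ s ∈ openSimplex n, opNorm p (softmaxJac s) < 1 / 2) ∧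
    (⨆ u : openSimplex n, opNorm p (softmaxJac (u : Fin n → ℝ))) = 1 / 2 ∧
    ∃ (sk : ℕ → Fin n → ℝ) (sb : Fin n → ℝ),
      (∀ k, sk k ∈ openSimplex n) ∧
      sb ∈ probSimplex n ∧ (∃ i, sb i = 0) ∧
      Filter.Tendsto sk Filter.atTop (nhds sb) ∧
      Filter.Tendsto (fun k => opNorm p (softmaxJac (sk k))) Filter.atTop (nhds (1 / 2)) := by
  have : NeZero n := ⟨by omega⟩
  have hlt : ∀ s ∈ openSimplex n, opNorm p (softmaxJac s) < 1 / 2 :=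
    fun s hs => opNorm_softmaxJac_lt hn hp1 hp2 hs
  let i₀ : Fin n := ⟨0, by omega⟩
  let i₁ : Fin n := ⟨1, by omega⟩
  have h₀₁ : i₀ ≠ i₁ := by simp [i₀, i₁, Fin.ext_iff]
  set sb : Fin n → ℝ := Pi.single i₀ (1 / 2) + Pi.single i₁ (1 / 2)
  have hsb : sb ∈ probSimplex n := single_add_single_mem_probSimplex i₀ i₁
  -- moving from `sb` towards the barycentre keeps the first two coordinates equal
  set sk : ℕ → Fin n → ℝ := fun k => AffineMap.lineMap sb (fun _ => (n : ℝ)⁻¹) (1 / ((k : ℝ) + 1))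
  have hsk : ∀ k, sk k ∈ openSimplex n := fun k =>
    lineMap_mem_openSimplex hsb const_inv_mem_openSimplex (by positivity)
      (div_le_one_of_le₀ (by simp) (by positivity))
  have hsk_lim : Tendsto sk atTop (𝓝 sb) := by
    have hcont : Continuous (AffineMap.lineMap (k := ℝ) sb (fun _ => (n : ℝ)⁻¹)) :=
      AffineMap.lineMap_continuous
    have := (hcont.tendsto 0).comp tendsto_one_div_add_atTop_nhds_zero_nat
    rwa [AffineMap.lineMap_apply_zero] at this
  have hnorm : Tendsto (fun k => opNorm p (softmaxJac (sk k))) atTop (𝓝 (1 / 2)) := by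
    refine tendsto_of_tendsto_of_tendsto_of_le_of_le ?_ tendsto_const_nhds
      (fun k => le_opNorm_softmaxJac hn hp1 hp2 (hsk k) h₀₁ ?_) fun k => (hlt _ (hsk k)).le
    · simpa [sb, h₀₁] using tendsto_pi_nhds.1 hsk_lim i₀
    · simp [sk, sb, AffineMap.lineMap_apply_module, h₀₁, h₀₁.symm]
  refine ⟨hlt, ciSup_eq_of_tendsto (fun s hs => (hlt s hs).le) hsk hnorm,
    sk, sb, hsk, hsb, ⟨⟨2, hn⟩, ?_⟩, hsk_lim, hnorm⟩
  simp [sb, i₀, i₁, Fin.ext_iff]
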